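/- Chaitin's incompleteness theorem: for any consistent, computably axiomatized formal theory T capable of expressing statements about Kolmogorov complexity, there exists a constant c_T such that T cannot prove any true statement of the form 'K(σ) > c_T' for any specific binary string σ. -/

import Mathlib

/-!
Chaitin's argument is a formalised Berry paradox. For each `n`, search through the enumeration
of provable statements for one of the form `K(τ) > 2n + d` and output its `τ`. This search is a
partial computable function of `n`; run on the prefix-free code `0ⁿ1` it becomes a prefix
machine, so universality bounds the complexity of its output by `n + c₀`. At `n = c₀` soundness
then gives `2c₀ + d < K(τ) ≤ 2c₀`, so no statement `K(σ) > c` with `c ≥ 2c₀` is provable.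
-/

open MeasureTheory Filter

abbrev Cantor : Type := ℕ → Bool

/-- The basic cylinder set of sequences extending the finite string `σ`. -/
def cylinder (σ : List Bool) : Set Cantor :=
  {x | ∀ i : Fin σ.length, x i = σ.get i}

/-- A measure on Cantor space is the fair Bernoulli (coin-flipping) measure iff it is a
probability measure giving each cylinder on a string of length `n` measure `2⁻ⁿ`. -/
def IsFairBernoulli (μ : Measure Cantor) : Prop :=
  IsProbabilityMeasure μ ∧ ∀ σ : List Bool, μ (cylinder σ) = (2 : ENNReal)⁻¹ ^ σ.length

def PrefixFreeSet (D : Set (List Bool)) : Prop :=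
  ∀ p ∈ D, ∀ q ∈ D, p <+: q → p = q

/-- A prefix(-free) machine: a partial computable map on binary strings with prefix-free domain. -/
def IsPrefixMachine (M : List Bool →. List Bool) : Prop :=
  Partrec M ∧ PrefixFreeSet {p | (M p).Dom}

/-- Kolmogorov complexity of `σ` relative to the machine `M` (valued in `ℕ∞`). -/
noncomputable def Kc (M : List Bool →. List Bool) (σ : List Bool) : ℕ∞ :=
  sInf {n : ℕ∞ | ∃ p : List Bool, (p.length : ℕ∞) = n ∧ σ ∈ M p}

/-- A universal prefix machine: a prefix machine minimizing complexity up to additive constants. -/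
def IsUniversalPrefixMachine (U : List Bool →. List Bool) : Prop :=
  IsPrefixMachine U ∧ ∀ M : List Bool →. List Bool, IsPrefixMachine M →
    ∃ c : ℕ, ∀ σ : List Bool, Kc U σ ≤ Kc M σ + (c : ℕ∞)

/-- The length-`n` prefix of an infinite binary sequence. -/
def prefixOf (x : Cantor) (n : ℕ) : List Bool := List.ofFn fun i : Fin n => x i

/-- Martin-Löf (1-)randomness, via the Levin–Schnorr complexity characterization:
`K(x↾n) ≥ n - c` for all `n`. -/
def OneRandom (U : List Bool →. List Bool) (x : Cantor) : Prop :=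
  ∃ c : ℕ, ∀ n : ℕ, (n : ℕ∞) ≤ Kc U (prefixOf x n) + (c : ℕ∞)

/-- A predicate is computably enumerable if it is the domain of a partial computable function. -/
def CEPred {α : Type} [Primcodable α] (p : α → Prop) : Prop :=
  ∃ f : α →. Unit, Partrec f ∧ ∀ a, p a ↔ (f a).Dom

open Nat.Partrec (Code)
open Encodable

section CEPred

variable {α β : Type} [Primcodable α] [Primcodable β]

theorem CEPred.comp {p : β → Prop} (hp : CEPred p) {f : α → β} (hf : Computable f) :
    CEPred fun a => p (f a) :=
  let ⟨F, hF, hpF⟩ := hp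
  ⟨fun a => F (f a), hF.comp hf, fun a => hpF (f a)⟩

theorem CEPred.exists_primrec_witness {p : α → Prop} (hp : CEPred p) :
    ∃ h : α → ℕ → Bool, Primrec₂ h ∧ ∀ a, p a ↔ ∃ k, h a k = true := by
  obtain ⟨f, hf, hpf⟩ := hp
  obtain ⟨cf, hcf⟩ := Code.exists_code.1 hf
  refine ⟨fun a k => (Code.evaln k cf (encode a)).isSome,
    Primrec.option_isSome.comp <| Code.primrec_evaln.comp <|
      (Primrec.snd.pair (Primrec.const cf)).pair (Primrec.encode.comp Primrec.fst), fun a => ?_⟩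
  have hdom : (f a).Dom ↔ (Code.eval cf (encode a)).Dom := by
    simp [hcf, encodek]
  rw [hpf, hdom, Part.dom_iff_mem]
  simp_rw [Code.evaln_complete, Option.isSome_iff_exists]
  exact ⟨fun ⟨x, k, hk⟩ => ⟨k, x, hk⟩, fun ⟨k, x, hk⟩ => ⟨x, k, hk⟩⟩

/-- Computable uniformization: dovetail over pairs (step bound, candidate witness). -/
theorem CEPred.exists_partrec_choice {R : α → β → Prop} (hR : CEPred fun x : α × β => R x.1 x.2) :
    ∃ g : α →. β, Partrec g ∧ ∀ a, ((∃ b, R a b) → (g a).Dom) ∧ ∀ b ∈ g a, R a b := by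
  obtain ⟨h, hh, hRh⟩ := hR.exists_primrec_witness
  let step (a : α) (n : ℕ) : Option β :=
    (decode (α := β) n.unpair.2).bind fun b => bif h (a, b) n.unpair.1 then some b else none
  have hstep : Computable₂ step := by
    open Primrec in
    exact to_comp <| option_bind (Primrec.decode.comp (snd.comp (unpair.comp snd))) <|
      cond (hh.comp (pair (fst.comp fst) snd) (fst.comp (unpair.comp (snd.comp fst))))
        (option_some.comp snd) (const none)
  refine ⟨fun a => Nat.rfindOpt (step a), Partrec.rfindOpt hstep, fun a => ⟨?_, ?_⟩⟩
  · rintro ⟨b, hb⟩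
    obtain ⟨k, hk⟩ := (hRh (a, b)).1 hb
    exact Nat.rfindOpt_dom.2 ⟨Nat.pair k (encode b), b, by simp [step, encodek, hk]⟩
  · intro b hb
    obtain ⟨n, hn⟩ := Nat.rfindOpt_spec hb
    simp only [step, Option.mem_def, Option.bind_eq_some_iff] at hn
    obtain ⟨b', -, hb'⟩ := hn
    cases hk : h (a, b') n.unpair.1 <;> simp only [hk, cond_true, cond_false] at hb'
    · cases hb'
    · obtain rfl := Option.some_inj.1 hb'
      exact (hRh (a, b')).2 ⟨_, hk⟩

end CEPred

def unaryCode (n : ℕ) : List Bool := List.replicate n false ++ [true]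

theorem length_unaryCode (n : ℕ) : (unaryCode n).length = n + 1 := by
  simp [unaryCode]

theorem eq_of_unaryCode_prefix {m n : ℕ} (h : unaryCode m <+: unaryCode n) : m = n := by
  have hle : m ≤ n := by simpa [length_unaryCode] using h.length_le
  by_contra hne
  have hm : m < n := lt_of_le_of_ne hle hne
  have := h.getElem (i := m) (by simp [length_unaryCode])
  simp [unaryCode, hm] at this

theorem primrec_unaryCode : Primrec unaryCode := by
  have hrep : Primrec fun n => List.replicate n false :=
    (Primrec.nat_rec₁ (f := fun _ l => false :: l) []
      (Primrec.list_cons.comp (Primrec.const false) Primrec.snd)).of_eq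
      fun n => by induction n with
        | zero => rfl
        | succ n ih => rw [List.replicate_succ, ← ih]
  exact Primrec.list_append.comp hrep (Primrec.const [true])

def decodeUnary (p : List Bool) : Option ℕ :=
  if p = unaryCode (p.length - 1) then some (p.length - 1) else none

theorem decodeUnary_eq_some_iff {p : List Bool} {n : ℕ} :
    decodeUnary p = some n ↔ p = unaryCode n := by
  unfold decodeUnary
  split_ifs with h
  · constructor
    · rintro ⟨⟩; exact h
    · rintro rfl; simp [length_unaryCode]
  · simp only [false_iff]
    rintro rfl
    simp [length_unaryCode] at h

theorem primrec_decodeUnary : Primrec decodeUnary := by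
  have hlen : Primrec fun p : List Bool => p.length - 1 :=
    Primrec.nat_sub.comp Primrec.list_length (Primrec.const 1)
  exact Primrec.ite (Primrec.eq.comp Primrec.id (primrec_unaryCode.comp hlen))
    (Primrec.option_some.comp hlen) (Primrec.const none)

def unaryMachine (g : ℕ →. List Bool) : List Bool →. List Bool :=
  fun p => (decodeUnary p : Part ℕ).bind fun n => g n

theorem mem_unaryMachine {g : ℕ →. List Bool} {p σ : List Bool} :
    σ ∈ unaryMachine g p ↔ ∃ n, p = unaryCode n ∧ σ ∈ g n := by
  rw [unaryMachine, Part.mem_bind_iff]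
  simp only [Part.mem_coe, Option.mem_def, decodeUnary_eq_some_iff]

theorem isPrefixMachine_unaryMachine {g : ℕ →. List Bool} (hg : Partrec g) :
    IsPrefixMachine (unaryMachine g) := by
  refine ⟨(Computable.ofOption primrec_decodeUnary.to_comp).bind (hg.comp Computable.snd),
    fun p hp q hq hpq => ?_⟩
  obtain ⟨m, rfl, -⟩ := mem_unaryMachine.1 (Part.get_mem hp)
  obtain ⟨n, rfl, -⟩ := mem_unaryMachine.1 (Part.get_mem hq)
  rw [eq_of_unaryCode_prefix hpq]

theorem Kc_le_length {M : List Bool →. List Bool} {p σ : List Bool} (h : σ ∈ M p) :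
    Kc M σ ≤ p.length :=
  sInf_le ⟨p, rfl, h⟩

theorem IsUniversalPrefixMachine.exists_Kc_le_add {U : List Bool →. List Bool}
    (hU : IsUniversalPrefixMachine U) {g : ℕ →. List Bool} (hg : Partrec g) :
    ∃ c : ℕ, ∀ n σ, σ ∈ g n → Kc U σ ≤ n + c := by
  obtain ⟨c, hc⟩ := hU.2 _ (isPrefixMachine_unaryMachine hg)
  refine ⟨c + 1, fun n σ hσ => ?_⟩
  calc Kc U σ ≤ Kc (unaryMachine g) σ + c := hc σ
    _ ≤ (unaryCode n).length + c :=
      add_le_add_left (Kc_le_length (mem_unaryMachine.2 ⟨n, rfl, hσ⟩)) _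
    _ = n + (c + 1 : ℕ) := by rw [length_unaryCode]; push_cast; ring

/-- Chaitin's incompleteness theorem. For any consistent, computably
axiomatized theory `T` (formalized by the c.e. set of pairs `(σ, c)` such that `T` proves
`K(σ) > c`, all such provable statements being true), there is a constant `c_T` such that
`T` proves no statement `K(σ) > c` with `c ≥ c_T`. -/
theorem chaitin_incompleteness (U : List Bool →. List Bool)
    (hU : IsUniversalPrefixMachine U)
    (Provable : List Bool × ℕ → Prop) (hce : CEPred Provable)
    (hsound : ∀ (σ : List Bool) (c : ℕ), Provable (σ, c) → (c : ℕ∞) < Kc U σ) :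
    ∃ cT : ℕ, ∀ (σ : List Bool) (c : ℕ), cT ≤ c → ¬ Provable (σ, c) := by
  have hshift : Computable fun x : ℕ × (List Bool × ℕ) => (x.2.1, 2 * x.1 + x.2.2) :=
    (Primrec.pair (Primrec.fst.comp Primrec.snd) (Primrec.nat_add.comp
      (Primrec.nat_mul.comp (Primrec.const 2) Primrec.fst) (Primrec.snd.comp Primrec.snd))).to_comp
  obtain ⟨search, hsearch, hspec⟩ := CEPred.exists_partrec_choice
    (R := fun (n : ℕ) (x : List Bool × ℕ) => Provable (x.1, 2 * n + x.2)) (hce.comp hshift)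
  obtain ⟨c₀, hc₀⟩ := hU.exists_Kc_le_add (hsearch.map (Computable.fst.comp Computable.snd).to₂)
  refine ⟨2 * c₀, fun σ c hc hprov => ?_⟩
  obtain ⟨⟨τ, d⟩, hτ⟩ := Part.dom_iff_mem.1 <|
    (hspec c₀).1 ⟨(σ, c - 2 * c₀), by rwa [Nat.add_sub_cancel' hc]⟩
  have hlower := hsound τ _ ((hspec c₀).2 _ hτ)
  have hupper := hc₀ c₀ τ (Part.mem_map Prod.fst hτ)
  have hcontra : ((2 * c₀ + d : ℕ) : ℕ∞) < c₀ + c₀ := hlower.trans_le hupper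
  norm_cast at hcontra
  omega
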